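/- Let x_0,…,x_N be the (distinct, real) roots of He_{N+1}, the probabilists' Hermite polynomial of degree N+1. Then ∑_{k=0}^{N} He_N(x_k)^{−2} = (N+1)/N!. -/

import Mathlib

open Polynomial

noncomputable def He : ℕ → Polynomial ℝ
  | 0 => 1
  | 1 => X
  | (n + 2) => X * He (n + 1) - C ((n : ℝ) + 1) * He n

lemma he_rec (n : ℕ) (y : ℝ) :
    (He (n + 2)).eval y = y * (He (n + 1)).eval y - ((n : ℝ) + 1) * (He n).eval y := by
  simp [He]

noncomputable def Sk (N : ℕ) (a b : ℝ) : ℝ :=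
  ∑ n ∈ Finset.range (N + 1),
    ((N.factorial : ℝ) / (n.factorial : ℝ)) * (He n).eval a * (He n).eval b

lemma Sk_succ (N : ℕ) (a b : ℝ) :
    Sk (N + 1) a b = (He (N + 1)).eval a * (He (N + 1)).eval b + ((N : ℝ) + 1) * Sk N a b := by
  have h : ∀ n : ℕ, (((N + 1).factorial : ℝ) / (n.factorial : ℝ))
      = ((N : ℝ) + 1) * ((N.factorial : ℝ) / (n.factorial : ℝ)) := by
    intro n; rw [Nat.factorial_succ]; push_cast; ring
  unfold Sk
  rw [Finset.sum_range_succ, div_self (by positivity : (((N + 1).factorial : ℕ) : ℝ) ≠ 0),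
    Finset.sum_congr rfl (fun n _ => by rw [h n]; ring :
      ∀ n ∈ Finset.range (N + 1), (((N + 1).factorial : ℝ) / (n.factorial : ℝ))
        * (He n).eval a * (He n).eval b
        = ((N : ℝ) + 1) * (((N.factorial : ℝ) / (n.factorial : ℝ))
          * (He n).eval a * (He n).eval b)),
    ← Finset.mul_sum]
  ring

lemma Sk_zero (a b : ℝ) : Sk 0 a b = 1 := by
  simp [Sk, He]

lemma CD (N : ℕ) (a b : ℝ) :
    (He (N + 1)).eval a * (He N).eval b - (He N).eval a * (He (N + 1)).eval b
      = (a - b) * Sk N a b := by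
  induction N with
  | zero => simp [Sk_zero, He]
  | succ n ih =>
    rw [he_rec, he_rec, Sk_succ]
    linear_combination ((n : ℝ) + 1) * ih

lemma confl (N : ℕ) (y : ℝ) :
    Sk (N + 1) y y
      = ((N : ℝ) + 2) * (He (N + 1)).eval y ^ 2
        - ((N : ℝ) + 1) * (He N).eval y * (He (N + 2)).eval y := by
  induction N with
  | zero =>
    rw [Sk_succ, Sk_zero, he_rec]
    simp [He]
    ring
  | succ n ih =>
    rw [Sk_succ, ih, he_rec n y, he_rec (n + 1) y, he_rec n y]
    push_cast
    ring

lemma he_nonzero (N : ℕ) (y : ℝ) (h : (He (N + 1)).eval y = 0) : (He N).eval y ≠ 0 := by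
  induction N with
  | zero => simp [He]
  | succ n ih =>
    intro h1
    have := he_rec n y
    rw [h, h1] at this
    have hn : (He n).eval y = 0 := by
      have : ((n : ℝ) + 1) * (He n).eval y = 0 := by linarith
      have hne : ((n : ℝ) + 1) ≠ 0 := by positivity
      exact (mul_eq_zero.mp this).resolve_left hne
    exact ih h1 hn

/-- If `x_0, …, x_N` are the distinct real roots of `He_{N+1}`, then
`∑_{k=0}^{N} He_N(x_k)⁻² = (N+1)/N!`. -/
theorem stmt_4 (N : ℕ) (x : Fin (N + 1) → ℝ) (hinj : Function.Injective x)
    (hroot : ∀ k, (He (N + 1)).eval (x k) = 0) :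
    ∑ k : Fin (N + 1), ((He N).eval (x k) ^ 2)⁻¹ = ((N : ℝ) + 1) / (N.factorial : ℝ) := by
  classical
  have hNfac : (N.factorial : ℝ) ≠ 0 := by positivity
  have hN1 : ((N : ℝ) + 1) ≠ 0 := by positivity
  have hHe : ∀ k, (He N).eval (x k) ≠ 0 := fun k => he_nonzero N (x k) (hroot k)
  set w : Fin (N + 1) → ℝ :=
    fun k => (N.factorial : ℝ) / (((N : ℝ) + 1) * (He N).eval (x k) ^ 2) with hw
  have hdiag : ∀ k, Sk N (x k) (x k) = ((N : ℝ) + 1) * (He N).eval (x k) ^ 2 := by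
    intro k
    cases N with
    | zero => simp [Sk_zero, He]
    | succ M =>
      rw [confl M (x k), hroot k]
      push_cast
      ring
  have hoff : ∀ j k, j ≠ k → Sk N (x j) (x k) = 0 := by
    intro j k hjk
    have hx : x j - x k ≠ 0 := sub_ne_zero.mpr (fun h => hjk (hinj h))
    have h0 : (x j - x k) * Sk N (x j) (x k) = 0 := by
      rw [← CD N (x j) (x k), hroot j, hroot k]; ring
    exact (mul_eq_zero.mp h0).resolve_left hx
  set A : Matrix (Fin (N + 1)) (Fin (N + 1)) ℝ :=
    Matrix.of fun i k => (He (i : ℕ)).eval (x k) with hA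
  set B : Matrix (Fin (N + 1)) (Fin (N + 1)) ℝ :=
    Matrix.of fun k i => w k * (He (i : ℕ)).eval (x k) / ((i : ℕ).factorial : ℝ) with hB
  have hBA : B * A = 1 := by
    ext j k
    rw [Matrix.mul_apply]
    have hsum : ∑ i : Fin (N + 1), B j i * A i k
        = w j / (N.factorial : ℝ) * Sk N (x j) (x k) := by
      have hterm : ∀ n : ℕ,
          w j * (He n).eval (x j) / (n.factorial : ℝ) * (He n).eval (x k)
            = w j / (N.factorial : ℝ) *
              (((N.factorial : ℝ) / (n.factorial : ℝ)) * (He n).eval (x j) * (He n).eval (x k)) := by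
        intro n
        have hnf : (n.factorial : ℝ) ≠ 0 := by positivity
        field_simp
      calc ∑ i : Fin (N + 1), B j i * A i k
          = ∑ i : Fin (N + 1),
              (fun n : ℕ => w j / (N.factorial : ℝ) *
                (((N.factorial : ℝ) / (n.factorial : ℝ)) * (He n).eval (x j) * (He n).eval (x k)))
                (i : ℕ) := by
            refine Finset.sum_congr rfl fun i _ => ?_
            simp only [hA, hB, Matrix.of_apply]
            exact hterm (i : ℕ)
        _ = ∑ n ∈ Finset.range (N + 1), w j / (N.factorial : ℝ) *
              (((N.factorial : ℝ) / (n.factorial : ℝ)) * (He n).eval (x j) * (He n).eval (x k)) :=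
            Fin.sum_univ_eq_sum_range (fun n : ℕ => w j / (N.factorial : ℝ) *
              (((N.factorial : ℝ) / (n.factorial : ℝ)) * (He n).eval (x j) * (He n).eval (x k)))
              (N + 1)
        _ = w j / (N.factorial : ℝ) * Sk N (x j) (x k) := by
            rw [Sk, Finset.mul_sum]
    rw [hsum]
    by_cases hjk : j = k
    · subst hjk
      rw [hdiag j, Matrix.one_apply_eq, hw]
      have h2 : ((N : ℝ) + 1) * (He N).eval (x j) ^ 2 ≠ 0 := by
        have := hHe j; positivity
      rw [div_div, div_mul_eq_mul_div, div_eq_one_iff_eq (by positivity)]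
      ring
    · rw [hoff j k hjk, Matrix.one_apply_ne hjk, mul_zero]
  have hAB : A * B = 1 := mul_eq_one_comm.mp hBA
  have h00 : (A * B) 0 0 = (1 : Matrix (Fin (N + 1)) (Fin (N + 1)) ℝ) 0 0 := by rw [hAB]
  rw [Matrix.mul_apply, Matrix.one_apply_eq] at h00
  have hsumw : ∑ k : Fin (N + 1), w k = 1 := by
    rw [← h00]
    refine Finset.sum_congr rfl fun k _ => ?_
    simp [hA, hB, He]
  have hfin : ∑ k : Fin (N + 1), ((He N).eval (x k) ^ 2)⁻¹
      = ∑ k : Fin (N + 1), w k * (((N : ℝ) + 1) / (N.factorial : ℝ)) := by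
    refine Finset.sum_congr rfl fun k _ => ?_
    rw [hw]
    have := hHe k
    field_simp
  rw [hfin, ← Finset.sum_mul, hsumw, one_mul]
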